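/- arXiv:1410.2617 — 2 statements merged into one kernel-verified Lean document; each statement's English description precedes it below -/
import Mathlib

section
/- In a generalized Łukasiewicz semi-ring S, the order x ≤ y iff x + y = y makes S a lattice, with join x ∨ y = x + y and meet x ∧ y = (x⁻ + y⁻)∼ = (x∼ + y∼)⁻. -/
/-- A generalized Łukasiewicz semi-ring: an additively idempotent semi-ring with
maps `⁻` (`nm`) and `∼` (`nt`) satisfying (i), (ii), (iii), where `x ≤ y ↔ x + y = y`. -/
class GLSemiring (S : Type*) extends Semiring S where
  add_idem : ∀ x : S, x + x = x
  nm : S → S   -- `x⁻`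
  nt : S → S   -- `x∼`
  ax_i : ∀ x y : S, (x * y = 0 ↔ y + nm x = nm x) ∧ (x * y = 0 ↔ x + nt y = nt y)
  ax_ii : ∀ x y : S, x + y = nm (nt (nt x * y) * nt x) ∧
    x + y = nm (nt x * nt (y * nm x))
  ax_iii : ∀ x y : S, nm (nt y * nt x) = nt (nm y * nm x)

namespace GLSemiring

variable {S : Type*} [GLSemiring S]

lemma add_eq_zero_left {a b : S} (h : a + b = 0) : a = 0 :=
  calc a = a + 0 := (add_zero a).symm
    _ = a + (a + b) := by rw [h]
    _ = (a + a) + b := (add_assoc a a b).symm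
    _ = a + b := by rw [add_idem]
    _ = 0 := h

lemma mul_nm_self (x : S) : x * nm x = 0 := (ax_i x (nm x)).1.mpr (add_idem _)

lemma nt_mul_self (x : S) : nt x * x = 0 := (ax_i (nt x) x).2.mpr (add_idem _)

lemma nm_antitone {x y : S} (h : x + y = y) : nm y + nm x = nm x := by
  apply (ax_i x (nm y)).1.mp
  apply add_eq_zero_left (b := y * nm y)
  rw [← add_mul, h, mul_nm_self]

lemma nt_antitone {x y : S} (h : x + y = y) : nt y + nt x = nt x := by
  apply (ax_i (nt y) x).2.mp
  apply add_eq_zero_left (b := nt y * y)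
  rw [← mul_add, h, nt_mul_self]

lemma nt_zero_mul_nt (x : S) : nt 0 * nt x = nt x := by
  have h1 : nt 0 * nt x + nt x = nt x := by
    apply (ax_i (nt 0 * nt x) x).2.mp
    rw [mul_assoc, nt_mul_self, mul_zero]
  have h2 : nt x + nt 0 * nt x = nt 0 * nt x := by
    have hone : (1 : S) + nt 0 = nt 0 := (ax_i (1 : S) (0 : S)).2.mp (mul_zero 1)
    calc nt x + nt 0 * nt x = (1 + nt 0) * nt x := by rw [add_mul, one_mul]
      _ = nt 0 * nt x := by rw [hone]
  calc nt 0 * nt x = nt x + nt 0 * nt x := h2.symm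
    _ = nt 0 * nt x + nt x := add_comm _ _
    _ = nt x := h1

lemma nm_mul_nm_zero (x : S) : nm x * nm 0 = nm x := by
  have h1 : nm x * nm 0 + nm x = nm x := by
    apply (ax_i x (nm x * nm 0)).1.mp
    rw [← mul_assoc, mul_nm_self, zero_mul]
  have h2 : nm x + nm x * nm 0 = nm x * nm 0 := by
    have hone : (1 : S) + nm 0 = nm 0 := (ax_i (0 : S) (1 : S)).1.mp (zero_mul 1)
    calc nm x + nm x * nm 0 = nm x * (1 + nm 0) := by rw [mul_add, mul_one]
      _ = nm x * nm 0 := by rw [hone]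
  calc nm x * nm 0 = nm x + nm x * nm 0 := h2.symm
    _ = nm x * nm 0 + nm x := add_comm _ _
    _ = nm x := h1

lemma nm_nt (x : S) : nm (nt x) = x := by
  have h := (ax_ii x 0).1
  rw [add_zero, mul_zero] at h
  rw [nt_zero_mul_nt] at h
  exact h.symm

lemma nt_nm (x : S) : nt (nm x) = x := by
  have h := (ax_ii x 0).2
  rw [add_zero, zero_mul] at h
  rw [ax_iii 0 x, nm_mul_nm_zero] at h
  exact h.symm

/-- lower bound property of `nt (nm x + nm y)` -/
lemma meet_le_left (x y : S) : nt (nm x + nm y) + x = x := by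
  have h : nm x + (nm x + nm y) = nm x + nm y := by rw [← add_assoc, add_idem]
  have := nt_antitone h
  rwa [nt_nm] at this

/-- lower bound property of `nm (nt x + nt y)` -/
lemma meet'_le_left (x y : S) : nm (nt x + nt y) + x = x := by
  have h : nt x + (nt x + nt y) = nt x + nt y := by rw [← add_assoc, add_idem]
  have := nm_antitone h
  rwa [nm_nt] at this

lemma meet_ge {x y l : S} (hx : l + x = x) (hy : l + y = y) :
    l + nt (nm x + nm y) = nt (nm x + nm y) := by
  have h : (nm x + nm y) + nm l = nm l := by
    rw [add_assoc, nm_antitone hy, nm_antitone hx]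
  have := nt_antitone h
  rwa [nt_nm] at this

lemma meet'_ge {x y l : S} (hx : l + x = x) (hy : l + y = y) :
    l + nm (nt x + nt y) = nm (nt x + nt y) := by
  have h : (nt x + nt y) + nt l = nt l := by
    rw [add_assoc, nt_antitone hy, nt_antitone hx]
  have := nm_antitone h
  rwa [nm_nt] at this

end GLSemiring

open GLSemiring in
/-- In a generalized Łukasiewicz semi-ring, the relation `x ≤ y ↔ x + y = y` is a
partial order making `S` a lattice, with join `x ∨ y = x + y` and meet
`x ∧ y = (x⁻ + y⁻)∼ = (x∼ + y∼)⁻`. -/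
theorem GLSemiring.lattice_structure {S : Type*} [GLSemiring S] :
    (∀ x : S, x + x = x) ∧
    (∀ x y : S, x + y = y → y + x = x → x = y) ∧
    (∀ x y z : S, x + y = y → y + z = z → x + z = z) ∧
    (∀ x y : S,
      (x + (x + y) = x + y) ∧ (y + (x + y) = x + y) ∧
      (∀ u : S, x + u = u → y + u = u → (x + y) + u = u)) ∧
    (∀ x y : S,
      (nt (nm x + nm y) + x = x) ∧ (nt (nm x + nm y) + y = y) ∧
      (∀ l : S, l + x = x → l + y = y → l + nt (nm x + nm y) = nt (nm x + nm y)) ∧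
      nt (nm x + nm y) = nm (nt x + nt y)) := by
  refine ⟨add_idem, ?_, ?_, ?_, ?_⟩
  · intro x y h1 h2
    rw [← h2, add_comm, h1]
  · intro x y z h1 h2
    rw [← h2, ← add_assoc, h1]
  · intro x y
    refine ⟨by rw [← add_assoc, add_idem], ?_, ?_⟩
    · rw [add_comm x y, ← add_assoc, add_idem]
    · intro u hx hy
      rw [add_assoc, hy, hx]
  · intro x y
    have hy : nt (nm x + nm y) + y = y := by
      have h : nm y + (nm x + nm y) = nm x + nm y := by
        rw [add_comm (nm x), ← add_assoc, add_idem]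
      have := nt_antitone h
      rwa [nt_nm] at this
    have hy' : nm (nt x + nt y) + y = y := by
      have h : nt y + (nt x + nt y) = nt x + nt y := by
        rw [add_comm (nt x), ← add_assoc, add_idem]
      have := nm_antitone h
      rwa [nm_nt] at this
    refine ⟨meet_le_left x y, hy, fun l hx hy => meet_ge hx hy, ?_⟩
    have h1 : nm (nt x + nt y) + nt (nm x + nm y) = nt (nm x + nm y) :=
      meet_ge (meet'_le_left x y) hy'
    have h2 : nt (nm x + nm y) + nm (nt x + nt y) = nm (nt x + nt y) :=
      meet'_ge (meet_le_left x y) hy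
    calc nt (nm x + nm y) = nm (nt x + nt y) + nt (nm x + nm y) := h1.symm
      _ = nt (nm x + nm y) + nm (nt x + nt y) := add_comm _ _
      _ = nm (nt x + nt y) := h2
end

section
/- In a unitary special primary ring R with maximal ideal M satisfying M^n = 0 and M^(n-1) ≠ 0, for every 1 ≤ k < n the left and right annihilators of M^k both equal M^(n-k). -/
variable {R : Type*} [NonUnitalRing R]

/-- The right annihilator of a two-sided ideal: `I⁻ = {x : ∀ a ∈ I, a * x = 0}`. -/
def annR (I : TwoSidedIdeal R) : TwoSidedIdeal R :=
  TwoSidedIdeal.mk' {x : R | ∀ a ∈ I, a * x = 0}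
    (fun a _ => mul_zero a)
    (fun {x y} hx hy a ha => by rw [mul_add, hx a ha, hy a ha, add_zero])
    (fun {x} hx a ha => by rw [mul_neg, hx a ha, neg_zero])
    (fun {x y} hy a ha => by rw [← mul_assoc]; exact hy _ (I.mul_mem_right a x ha))
    (fun {x y} hx a ha => by rw [← mul_assoc, hx a ha, zero_mul])

/-- The left annihilator of a two-sided ideal: `I∼ = {x : ∀ a ∈ I, x * a = 0}`. -/
def annL (I : TwoSidedIdeal R) : TwoSidedIdeal R :=
  TwoSidedIdeal.mk' {x : R | ∀ a ∈ I, x * a = 0}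
    (fun a _ => zero_mul a)
    (fun {x y} hx hy a ha => by rw [add_mul, hx a ha, hy a ha, add_zero])
    (fun {x} hx a ha => by rw [neg_mul, hx a ha, neg_zero])
    (fun {x y} hy a ha => by rw [mul_assoc, hy a ha, mul_zero])
    (fun {x y} hx a ha => by rw [mul_assoc]; exact hx _ (I.mul_mem_left y a ha))

/-- The product of two two-sided ideals: the ideal generated by `{a * b : a ∈ I, b ∈ J}`. -/
def prodI (I J : TwoSidedIdeal R) : TwoSidedIdeal R :=
  sInf {K : TwoSidedIdeal R | ∀ a ∈ I, ∀ b ∈ J, a * b ∈ K}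

/-- Powers of a two-sided ideal: `I^0 = ⊤`, `I^(k+1) = I · I^k`. -/
def powI {R : Type*} [NonUnitalRing R] (M : TwoSidedIdeal R) : ℕ → TwoSidedIdeal R
  | 0 => ⊤
  | k + 1 => prodI M (powI M k)

lemma mem_prodI_of {I J : TwoSidedIdeal R} {a b : R} (ha : a ∈ I) (hb : b ∈ J) :
    a * b ∈ prodI I J :=
  (TwoSidedIdeal.mem_sInf R).mpr fun _ hK => hK a ha b hb

lemma prodI_le {I J K : TwoSidedIdeal R} (h : ∀ a ∈ I, ∀ b ∈ J, a * b ∈ K) :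
    prodI I J ≤ K :=
  sInf_le h

lemma prodI_mono_right {I J J' : TwoSidedIdeal R} (h : J ≤ J') : prodI I J ≤ prodI I J' :=
  prodI_le fun a ha b hb => mem_prodI_of ha (h hb)

/-- `{x | ∀ a ∈ A, a * x ∈ P}` is a two-sided ideal. -/
def leftTransporter (A P : TwoSidedIdeal R) : TwoSidedIdeal R :=
  TwoSidedIdeal.mk' {x : R | ∀ a ∈ A, a * x ∈ P}
    (fun a _ => by rw [mul_zero]; exact P.zero_mem)
    (fun {x y} hx hy a ha => by rw [mul_add]; exact P.add_mem (hx a ha) (hy a ha))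
    (fun {x} hx a ha => by rw [mul_neg]; exact P.neg_mem (hx a ha))
    (fun {x y} hy a ha => by
      rw [← mul_assoc]; exact hy _ (A.mul_mem_right a x ha))
    (fun {x y} hx a ha => by
      rw [← mul_assoc]; exact P.mul_mem_right _ y (hx a ha))

lemma mem_leftTransporter {A P : TwoSidedIdeal R} {x : R} :
    x ∈ leftTransporter A P ↔ ∀ a ∈ A, a * x ∈ P :=
  TwoSidedIdeal.mem_mk' _ _ _ _ _ _ x

/-- `{x | ∀ b ∈ B, x * b ∈ P}` is a two-sided ideal. -/
def rightTransporter (B P : TwoSidedIdeal R) : TwoSidedIdeal R :=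
  TwoSidedIdeal.mk' {x : R | ∀ b ∈ B, x * b ∈ P}
    (fun b _ => by rw [zero_mul]; exact P.zero_mem)
    (fun {x y} hx hy b hb => by rw [add_mul]; exact P.add_mem (hx b hb) (hy b hb))
    (fun {x} hx b hb => by rw [neg_mul]; exact P.neg_mem (hx b hb))
    (fun {x y} hy b hb => by
      rw [mul_assoc]; exact P.mul_mem_left x _ (hy b hb))
    (fun {x y} hx b hb => by
      rw [mul_assoc]; exact hx _ (B.mul_mem_left y b hb))

lemma mem_rightTransporter {B P : TwoSidedIdeal R} {x : R} :
    x ∈ rightTransporter B P ↔ ∀ b ∈ B, x * b ∈ P :=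
  TwoSidedIdeal.mem_mk' _ _ _ _ _ _ x

/-- associativity inequality -/
lemma prodI_assoc_le {A B C : TwoSidedIdeal R} :
    prodI A (prodI B C) ≤ prodI (prodI A B) C := by
  apply prodI_le
  intro a ha q hq
  have h1 : prodI B C ≤ leftTransporter A (prodI (prodI A B) C) := by
    apply prodI_le
    intro b hb c hc
    rw [mem_leftTransporter]
    intro a' ha'
    rw [← mul_assoc]
    exact mem_prodI_of (mem_prodI_of ha' hb) hc
  exact mem_leftTransporter.mp (h1 hq) a ha

lemma mul_mem_powI {M : TwoSidedIdeal R} :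
    ∀ (i j : ℕ) {x y : R}, x ∈ powI M i → y ∈ powI M j → x * y ∈ powI M (i + j) := by
  intro i
  induction i with
  | zero => intro j x y _ hy; simpa using (powI M j).mul_mem_left x y hy
  | succ i ih =>
    intro j x y hx hy
    have key : powI M (i + 1) ≤ rightTransporter (powI M j) (powI M (i + 1 + j)) := by
      show prodI M (powI M i) ≤ _
      apply prodI_le
      intro a ha b hb
      rw [mem_rightTransporter]
      intro c hc
      rw [mul_assoc]
      have : b * c ∈ powI M (i + j) := ih j hb hc
      have : a * (b * c) ∈ prodI M (powI M (i + j)) := mem_prodI_of ha this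
      have heq : i + 1 + j = (i + j) + 1 := by omega
      rw [heq]
      exact this
    exact mem_rightTransporter.mp (key hx) y hy

lemma powI_add_le {R : Type*} [Ring R] (M : TwoSidedIdeal R) :
    ∀ i j : ℕ, powI M (i + j) ≤ prodI (powI M i) (powI M j) := by
  intro i
  induction i with
  | zero =>
    intro j x hx
    simp only [Nat.zero_add] at hx
    have : (1 : R) * x ∈ prodI (powI M 0) (powI M j) :=
      mem_prodI_of (TwoSidedIdeal.mem_top R) hx
    simpa using this
  | succ i ih =>
    intro j
    have h1 : powI M (i + 1 + j) = prodI M (powI M (i + j)) := by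
      have : i + 1 + j = (i + j) + 1 := by omega
      rw [this]; rfl
    rw [h1]
    calc prodI M (powI M (i + j)) ≤ prodI M (prodI (powI M i) (powI M j)) :=
          prodI_mono_right (ih j)
      _ ≤ prodI (prodI M (powI M i)) (powI M j) := prodI_assoc_le
      _ = prodI (powI M (i + 1)) (powI M j) := rfl

lemma powI_succ_le (M : TwoSidedIdeal R) (i : ℕ) : powI M (i + 1) ≤ powI M i :=
  prodI_le fun a _ b hb => (powI M i).mul_mem_left a b hb

lemma powI_antitone (M : TwoSidedIdeal R) {i j : ℕ} (h : i ≤ j) : powI M j ≤ powI M i := by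
  induction h with
  | refl => exact le_refl _
  | step h ih => exact le_trans (powI_succ_le M _) ih

/-- In a unitary special primary ring with maximal ideal `M`, `M^n = 0`, `M^(n-1) ≠ 0`,
for every `1 ≤ k < n` the left and right annihilators of `M^k` both equal `M^(n-k)`. -/
theorem spir_ann_pow {R : Type*} [Ring R] (M : TwoSidedIdeal R)
    (hmax : IsCoatom M) (huniq : ∀ N : TwoSidedIdeal R, IsCoatom N → N = M)
    (hpow : ∀ I : TwoSidedIdeal R, I ≠ ⊤ → ∃ k : ℕ, I = powI M k)
    (n : ℕ) (hn : powI M n = ⊥) (hn1 : powI M (n - 1) ≠ ⊥)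
    (k : ℕ) (hk1 : 1 ≤ k) (hkn : k < n) :
    annL (powI M k) = powI M (n - k) ∧ annR (powI M k) = powI M (n - k) := by
  have hkle : k ≤ n := le_of_lt hkn
  have hnk : n - k + k = n := Nat.sub_add_cancel hkle
  have hnk' : k + (n - k) = n := by omega
  -- powers below n are nonzero
  have hne_bot : ∀ m : ℕ, m < n → powI M m ≠ ⊥ := by
    intro m hm hbot
    exact hn1 (le_bot_iff.mp (hbot ▸ powI_antitone M (by omega : m ≤ n - 1)))
  have hkbot : powI M k ≠ ⊥ := hne_bot k hkn
  -- `M^(n-k) ≤ annL (M^k)` and `M^(n-k) ≤ annR (M^k)`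
  have hL1 : powI M (n - k) ≤ annL (powI M k) := by
    intro x hx
    rw [annL, TwoSidedIdeal.mem_mk']
    intro a ha
    have : x * a ∈ powI M (n - k + k) := mul_mem_powI _ _ hx ha
    rw [hnk, hn] at this
    exact (TwoSidedIdeal.mem_bot R).mp this
  have hR1 : powI M (n - k) ≤ annR (powI M k) := by
    intro x hx
    rw [annR, TwoSidedIdeal.mem_mk']
    intro a ha
    have : a * x ∈ powI M (k + (n - k)) := mul_mem_powI _ _ ha hx
    rw [hnk', hn] at this
    exact (TwoSidedIdeal.mem_bot R).mp this
  -- generic argument: any ideal annihilating M^k on one side is ≤ M^(n-k), provided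
  -- it equals some power M^j with M^(j+k) = 0 (or M^(k+j) = 0)
  constructor
  · -- annL
    have hne_top : annL (powI M k) ≠ ⊤ := by
      intro htop
      apply hkbot
      apply le_bot_iff.mp
      intro a ha
      have h1 : (1 : R) ∈ annL (powI M k) := htop ▸ TwoSidedIdeal.mem_top R
      rw [annL, TwoSidedIdeal.mem_mk'] at h1
      exact (TwoSidedIdeal.mem_bot R).mpr (by simpa using h1 a ha)
    obtain ⟨j, hj⟩ := hpow _ hne_top
    have hzero : powI M (j + k) = ⊥ := by
      apply le_bot_iff.mp
      refine le_trans (powI_add_le M j k) (prodI_le ?_)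
      intro x hx a ha
      have hx' : x ∈ annL (powI M k) := hj ▸ hx
      rw [annL, TwoSidedIdeal.mem_mk'] at hx'
      exact (TwoSidedIdeal.mem_bot R).mpr (hx' a ha)
    have hjk : n ≤ j + k := by
      by_contra h
      exact hne_bot _ (by omega) hzero
    have hj2 : n - k ≤ j := by omega
    have : annL (powI M k) ≤ powI M (n - k) := hj ▸ powI_antitone M hj2
    exact le_antisymm this hL1
  · -- annR
    have hne_top : annR (powI M k) ≠ ⊤ := by
      intro htop
      apply hkbot
      apply le_bot_iff.mp
      intro a ha
      have h1 : (1 : R) ∈ annR (powI M k) := htop ▸ TwoSidedIdeal.mem_top R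
      rw [annR, TwoSidedIdeal.mem_mk'] at h1
      exact (TwoSidedIdeal.mem_bot R).mpr (by simpa using h1 a ha)
    obtain ⟨j, hj⟩ := hpow _ hne_top
    have hzero : powI M (k + j) = ⊥ := by
      apply le_bot_iff.mp
      refine le_trans (powI_add_le M k j) (prodI_le ?_)
      intro a ha x hx
      have hx' : x ∈ annR (powI M k) := hj ▸ hx
      rw [annR, TwoSidedIdeal.mem_mk'] at hx'
      exact (TwoSidedIdeal.mem_bot R).mpr (hx' a ha)
    have hjk : n ≤ k + j := by
      by_contra h
      exact hne_bot _ (by omega) hzero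
    have hj2 : n - k ≤ j := by omega
    have : annR (powI M k) ≤ powI M (n - k) := hj ▸ powI_antitone M hj2
    exact le_antisymm this hR1
end
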